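/- Let T > 0, c > 0, d ∈ ℝ, and let (λ_n) satisfy the hypotheses of the squeezing lemma: ((n-1)π/T)^2 ≤ c λ_n + d ≤ ((2n-1)π/T)^2 for large n. Then for any eigenvalue λ = λ_m with m sufficiently large: if λ < n^2 π^2/(2 c T^2) then m < n, and if λ > 4 n^2 π^2/(c T^2) then m > n. -/
import Mathlib


open Real

theorem eigenvalue_position_bounds (T c d : ℝ) (hT : 0 < T) (hc : 0 < c)
    (L : ℕ → ℝ)
    (hsq : ∃ N : ℕ, ∀ n ≥ N,
      (((n : ℝ) - 1) * π / T) ^ 2 ≤ c * L n + d ∧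
      c * L n + d ≤ ((2 * (n : ℝ) - 1) * π / T) ^ 2) :
    ∃ M : ℕ, ∀ m ≥ M, ∀ n : ℕ,
      (L m < (n : ℝ) ^ 2 * π ^ 2 / (2 * c * T ^ 2) → m < n) ∧
      (L m > 4 * (n : ℝ) ^ 2 * π ^ 2 / (c * T ^ 2) → m > n) := by
  obtain ⟨N, hN⟩ := hsq
  have hπ := Real.pi_pos
  have hT2 : (0:ℝ) < T ^ 2 := by positivity
  have hπ2 : (0:ℝ) < π ^ 2 := by positivity
  obtain ⟨K, hK⟩ := exists_nat_gt (|d| * T ^ 2 / π ^ 2 + 6)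
  refine ⟨N + K, fun m hm n => ?_⟩
  have hmN : m ≥ N := le_trans (Nat.le_add_right _ _) hm
  have hmK : (K:ℝ) ≤ (m:ℝ) := by exact_mod_cast le_trans (Nat.le_add_left _ _) hm
  have hmbig : |d| * T ^ 2 / π ^ 2 + 6 < (m:ℝ) := lt_of_lt_of_le hK hmK
  have hmπ : |d| * T ^ 2 + 6 * π ^ 2 < (m:ℝ) * π ^ 2 := by
    have := (div_lt_iff₀ hπ2).mp (by linarith : |d| * T ^ 2 / π ^ 2 < (m:ℝ) - 6)
    nlinarith
  obtain ⟨h1, h2⟩ := hN m hmN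
  have h1T : ((m:ℝ) - 1) ^ 2 * π ^ 2 ≤ (c * L m + d) * T ^ 2 := by
    rw [div_pow] at h1
    have := (div_le_iff₀ hT2).mp h1
    nlinarith [this]
  have h2T : (c * L m + d) * T ^ 2 ≤ (2 * (m:ℝ) - 1) ^ 2 * π ^ 2 := by
    rw [div_pow] at h2
    have := (le_div_iff₀ hT2).mp h2
    nlinarith [this]
  have hd1 : d * T ^ 2 ≤ |d| * T ^ 2 := by nlinarith [le_abs_self d]
  have hd2 : -(d * T ^ 2) ≤ |d| * T ^ 2 := by nlinarith [neg_abs_le d]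
  constructor
  · intro h
    by_contra hlt
    have hnm : (n:ℝ) ≤ (m:ℝ) := by exact_mod_cast Nat.le_of_not_lt (fun hh => hlt hh)
    have h' : L m * (2 * c * T ^ 2) < (n:ℝ) ^ 2 * π ^ 2 :=
      (lt_div_iff₀ (by positivity)).mp h
    have hn2 : (n:ℝ) ^ 2 ≤ (m:ℝ) ^ 2 := pow_le_pow_left₀ (Nat.cast_nonneg n) hnm 2
    have hn2π : (n:ℝ) ^ 2 * π ^ 2 ≤ (m:ℝ) ^ 2 * π ^ 2 :=
      mul_le_mul_of_nonneg_right hn2 hπ2.le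
    have hm3 : 0 ≤ ((m:ℝ) - 3) ^ 2 * π ^ 2 := mul_nonneg (sq_nonneg _) hπ2.le
    linarith [h1T, h', hn2π, hm3, hmπ, hd1, hπ2]
  · intro h
    by_contra hgt
    have hmn : (m:ℝ) ≤ (n:ℝ) := by exact_mod_cast Nat.le_of_not_lt (fun hh => hgt hh)
    have h' : 4 * (n:ℝ) ^ 2 * π ^ 2 < L m * (c * T ^ 2) :=
      (div_lt_iff₀ (by positivity)).mp h
    have hm2 : (m:ℝ) ^ 2 ≤ (n:ℝ) ^ 2 := pow_le_pow_left₀ (Nat.cast_nonneg m) hmn 2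
    have hm2π : (m:ℝ) ^ 2 * π ^ 2 ≤ (n:ℝ) ^ 2 * π ^ 2 :=
      mul_le_mul_of_nonneg_right hm2 hπ2.le
    have hmpos : 0 ≤ (m:ℝ) * π ^ 2 := mul_nonneg (Nat.cast_nonneg m : (0:ℝ) ≤ m) hπ2.le
    linarith [h2T, h', hm2π, hmpos, hmπ, hd2, hπ2]
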